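/- arXiv:2605.30502 — 9 statements merged into one kernel-verified Lean document; each statement's English description precedes it below -/
import Mathlib

section
/- Let f : ℝ^d → ℝ be convex and differentiable with L-Lipschitz gradient (L > 0), with nonempty set of minimizers X⋆ and minimum value f⋆. Let (x^(k)) be the iterates of the accelerated method applied to f from an initialization x^(0). Then for any real numbers ε, δ, D with δ ≥ 2ε > 0 and D > 0, if f(x^(0)) − f⋆ ≥ δ and dist(x^(0), X⋆) ≤ D, there exists a natural number k with k ≤ √(2LD²/(δ − ε)) such that f(x^(k)) ≤ f(x^(0)) − ε. -/
/-!
For every `z`, a gradient step `x⁺ = y - (1/L) ∇f(y)` satisfies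
`f x⁺ ≤ f z + L ⟪y - x⁺, y - z⟫ - L/2 ‖y - x⁺‖²` (convexity at `y` plus the descent lemma).
Adding this inequality for `z = x k` and `z = x⋆` with weights `θ k (θ k - 1)` and `θ k`, and using
`θ (k+1)² - θ (k+1) = θ k²`, shows that `θ (k-1)² (f (x k) - f⋆) + L/2 ‖z k - x⋆‖²` is
non-increasing, where `z k = x k + θ k (y k - x k)`. As `θ k ≥ (k + 2)/2`, this gives
`f (x k) - f⋆ ≤ 2 L ‖x 0 - x⋆‖² / (k + 1)²` for a nearest minimizer `x⋆`, so at
`k = ⌊√(2 L D² / (δ - ε))⌋` the gap is at most `δ - ε ≤ f (x 0) - f⋆ - ε`.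
-/

open Set
open scoped RealInnerProductSpace

section Smooth

variable {E : Type*} [NormedAddCommGroup E] [InnerProductSpace ℝ E] [CompleteSpace E]
  {f : E → ℝ} {f' : E → E} {L : ℝ}

theorem HasGradientAt.hasDerivAt_comp_add_smul {g a v : E} {t : ℝ}
    (hg : HasGradientAt f g (a + t • v)) :
    HasDerivAt (fun s : ℝ => f (a + s • v)) ⟪g, v⟫ t := by
  have hline : HasDerivAt (fun s : ℝ => a + s • v) v t := by
    simpa using ((hasDerivAt_id t).smul_const v).const_add a
  simpa [InnerProductSpace.toDual_apply_apply, Function.comp_def] using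
    hg.hasFDerivAt.comp_hasDerivAt t hline

theorem ConvexOn.inner_le_sub_of_hasGradientAt (hconv : ConvexOn ℝ univ f)
    (hgrad : ∀ z, HasGradientAt f (f' z) z) (a b : E) :
    ⟪f' a, b - a⟫ ≤ f b - f a := by
  let φ : ℝ → ℝ := fun s => f (a + s • (b - a))
  have hφ : ConvexOn ℝ univ φ := by
    simpa [Function.comp_def] using hconv.comp_affineMap
      (AffineMap.const ℝ ℝ a + (LinearMap.toSpanSingleton ℝ E (b - a)).toAffineMap)
  have hφ' : HasDerivAt φ ⟪f' a, b - a⟫ 0 :=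
    HasGradientAt.hasDerivAt_comp_add_smul (by simpa using hgrad a)
  simpa [φ, slope] using
    hφ.le_slope_of_hasDerivAt (mem_univ 0) (mem_univ 1) zero_lt_one hφ'

theorem sub_sub_inner_le_of_lipschitz_gradient (hgrad : ∀ z, HasGradientAt f (f' z) z)
    (hlip : ∀ z w, ‖f' z - f' w‖ ≤ L * ‖z - w‖) (a b : E) :
    f b - f a - ⟪f' a, b - a⟫ ≤ L / 2 * ‖b - a‖ ^ 2 := by
  set v := b - a
  -- `ψ` is antitone on `[0, 1]` because `f' (a + t • v) - f' a` is at most `L t ‖v‖` in norm.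
  let ψ : ℝ → ℝ := fun t => f (a + t • v) - t * ⟪f' a, v⟫ - L / 2 * ‖v‖ ^ 2 * t ^ 2
  have hψ : ∀ t, HasDerivAt ψ (⟪f' (a + t • v), v⟫ - ⟪f' a, v⟫ - L * ‖v‖ ^ 2 * t) t := by
    intro t
    have hf : HasDerivAt (fun s : ℝ => f (a + s • v)) ⟪f' (a + t • v), v⟫ t :=
      (hgrad _).hasDerivAt_comp_add_smul
    have hlin : HasDerivAt (fun s : ℝ => s * ⟪f' a, v⟫) ⟪f' a, v⟫ t := by
      simpa using (hasDerivAt_id t).mul_const ⟪f' a, v⟫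
    have hquad : HasDerivAt (fun s : ℝ => L / 2 * ‖v‖ ^ 2 * s ^ 2) (L * ‖v‖ ^ 2 * t) t := by
      refine ((hasDerivAt_pow 2 t).const_mul (L / 2 * ‖v‖ ^ 2)).congr_deriv ?_
      push_cast; ring
    exact (hf.sub hlin).sub hquad
  have hψ_anti : AntitoneOn ψ (Icc 0 1) := by
    refine antitoneOn_of_hasDerivWithinAt_nonpos (convex_Icc 0 1)
      (HasDerivAt.continuousOn fun t _ => hψ t) (fun t _ => (hψ t).hasDerivWithinAt) ?_
    intro t ht
    rw [interior_Icc] at ht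
    have hlip_t : ‖f' (a + t • v) - f' a‖ ≤ L * (t * ‖v‖) := by
      simpa [norm_smul, abs_of_pos ht.1] using hlip (a + t • v) a
    calc ⟪f' (a + t • v), v⟫ - ⟪f' a, v⟫ - L * ‖v‖ ^ 2 * t
        = ⟪f' (a + t • v) - f' a, v⟫ - L * ‖v‖ ^ 2 * t := by rw [inner_sub_left]
      _ ≤ ‖f' (a + t • v) - f' a‖ * ‖v‖ - L * ‖v‖ ^ 2 * t := by
        gcongr; exact real_inner_le_norm _ _
      _ ≤ L * (t * ‖v‖) * ‖v‖ - L * ‖v‖ ^ 2 * t := by gcongr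
      _ = 0 := by ring
  have := hψ_anti (left_mem_Icc.2 zero_le_one) (right_mem_Icc.2 zero_le_one) zero_le_one
  simp [ψ, v] at this
  linarith

theorem sub_le_half_mul_sq_of_isMin (hgrad : ∀ z, HasGradientAt f (f' z) z)
    (hlip : ∀ z w, ‖f' z - f' w‖ ≤ L * ‖z - w‖) {xs : E} (hmin : ∀ z, f xs ≤ f z) (b : E) :
    f b - f xs ≤ L / 2 * ‖b - xs‖ ^ 2 := by
  have hzero : f' xs = 0 := by
    simpa using IsLocalMin.hasFDerivAt_eq_zero (.of_forall hmin) (hgrad xs).hasFDerivAt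
  simpa [hzero] using sub_sub_inner_le_of_lipschitz_gradient hgrad hlip xs b

theorem le_of_gradient_step (hL : 0 < L) (hconv : ConvexOn ℝ univ f)
    (hgrad : ∀ z, HasGradientAt f (f' z) z) (hlip : ∀ z w, ‖f' z - f' w‖ ≤ L * ‖z - w‖)
    {y x' : E} (hx' : x' = y - (1 / L) • f' y) (z : E) :
    f x' ≤ f z + L * ⟪y - x', y - z⟫ - L / 2 * ‖y - x'‖ ^ 2 := by
  have hgy : f' y = L • (y - x') := by
    rw [hx', sub_sub_cancel, smul_smul, mul_one_div_cancel hL.ne', one_smul]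
  have hdescent := sub_sub_inner_le_of_lipschitz_gradient hgrad hlip y x'
  have hconvex := hconv.inner_le_sub_of_hasGradientAt hgrad y z
  rw [hgy, ← neg_sub y x', inner_neg_right, real_inner_smul_left, real_inner_self_eq_norm_sq,
    norm_neg] at hdescent
  rw [hgy, ← neg_sub y z, inner_neg_right, real_inner_smul_left] at hconvex
  linarith

end Smooth

section Momentum

variable {θ : ℕ → ℝ}

theorem momentum_succ_sq_sub (hθ : ∀ k, θ (k + 1) = (1 + √(1 + 4 * θ k ^ 2)) / 2) (k : ℕ) :
    θ (k + 1) ^ 2 - θ (k + 1) = θ k ^ 2 := by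
  have hsq : √(1 + 4 * θ k ^ 2) ^ 2 = 1 + 4 * θ k ^ 2 := Real.sq_sqrt (by positivity)
  rw [hθ k]
  linear_combination hsq / 4

theorem half_add_one_le_momentum (hθ0 : θ 0 = 1)
    (hθ : ∀ k, θ (k + 1) = (1 + √(1 + 4 * θ k ^ 2)) / 2) (k : ℕ) : ((k : ℝ) + 2) / 2 ≤ θ k := by
  induction k with
  | zero => simp [hθ0]
  | succ k ih =>
    have h2θ : 2 * θ k ≤ √(1 + 4 * θ k ^ 2) :=
      (le_abs_self _).trans (Real.abs_le_sqrt (by linarith))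
    rw [hθ k]
    push_cast
    linarith

end Momentum

section Accelerated

variable {E : Type*} [NormedAddCommGroup E] [InnerProductSpace ℝ E]

structure IsAcceleratedGradient (L : ℝ) (f' : E → E) (x y : ℕ → E) (θ : ℕ → ℝ) : Prop where
  θ_zero : θ 0 = 1
  y_zero : y 0 = x 0
  x_succ : ∀ k, x (k + 1) = y k - (1 / L) • f' (y k)
  θ_succ : ∀ k, θ (k + 1) = (1 + √(1 + 4 * θ k ^ 2)) / 2
  y_succ : ∀ k, y (k + 1) = x (k + 1) + ((θ k - 1) / θ (k + 1)) • (x (k + 1) - x k)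

def extrapolation (x y : ℕ → E) (θ : ℕ → ℝ) (k : ℕ) : E := x k + θ k • (y k - x k)

namespace IsAcceleratedGradient

variable {L : ℝ} {f' : E → E} {x y : ℕ → E} {θ : ℕ → ℝ}

theorem one_le_θ (h : IsAcceleratedGradient L f' x y θ) (k : ℕ) : 1 ≤ θ k := by
  linarith [half_add_one_le_momentum h.θ_zero h.θ_succ k, k.cast_nonneg (α := ℝ)]

theorem extrapolation_zero (h : IsAcceleratedGradient L f' x y θ) :
    extrapolation x y θ 0 = x 0 := by
  simp [extrapolation, h.y_zero]

theorem extrapolation_succ (h : IsAcceleratedGradient L f' x y θ) (k : ℕ) :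
    extrapolation x y θ (k + 1) = extrapolation x y θ k - θ k • (y k - x (k + 1)) := by
  have hθ : θ (k + 1) ≠ 0 := (zero_lt_one.trans_le (h.one_le_θ (k + 1))).ne'
  rw [extrapolation, extrapolation, h.y_succ k, add_sub_cancel_left, smul_smul,
    mul_div_cancel₀ _ hθ]
  module

variable [CompleteSpace E] {f : E → ℝ}

theorem energy_step (h : IsAcceleratedGradient L f' x y θ) (hL : 0 < L)
    (hconv : ConvexOn ℝ univ f) (hgrad : ∀ z, HasGradientAt f (f' z) z)
    (hlip : ∀ z w, ‖f' z - f' w‖ ≤ L * ‖z - w‖) (xs : E) (k : ℕ) :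
    θ k ^ 2 * (f (x (k + 1)) - f xs) - (θ k ^ 2 - θ k) * (f (x k) - f xs) ≤
      L / 2 * (‖extrapolation x y θ k - xs‖ ^ 2 - ‖extrapolation x y θ (k + 1) - xs‖ ^ 2) := by
  set t := θ k
  set g := y k - x (k + 1)
  set u := extrapolation x y θ k - xs
  have ht : 1 ≤ t := h.one_le_θ k
  have hstep_x := le_of_gradient_step hL hconv hgrad hlip (h.x_succ k) (x k)
  have hstep_xs := le_of_gradient_step hL hconv hgrad hlip (h.x_succ k) xs
  have hu : ⟪u, g⟫ = (t - 1) * ⟪g, y k - x k⟫ + ⟪g, y k - xs⟫ := by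
    have : u = (t - 1) • (y k - x k) + (y k - xs) := by
      simp only [u, extrapolation, t]; module
    rw [real_inner_comm, this, inner_add_right, real_inner_smul_right]
  have hnorm :
      ‖extrapolation x y θ (k + 1) - xs‖ ^ 2 = ‖u‖ ^ 2 - 2 * t * ⟪u, g⟫ + t ^ 2 * ‖g‖ ^ 2 := by
    rw [h.extrapolation_succ k, sub_right_comm, norm_sub_sq_real, real_inner_smul_right,
      norm_smul, mul_pow, Real.norm_eq_abs, sq_abs]
    ring
  rw [hnorm]
  linear_combination (t * (t - 1)) * hstep_x + t * hstep_xs - (L * t) * hu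

theorem energy_le (h : IsAcceleratedGradient L f' x y θ) (hL : 0 < L)
    (hconv : ConvexOn ℝ univ f) (hgrad : ∀ z, HasGradientAt f (f' z) z)
    (hlip : ∀ z w, ‖f' z - f' w‖ ≤ L * ‖z - w‖) (xs : E) (k : ℕ) :
    θ k ^ 2 * (f (x (k + 1)) - f xs) + L / 2 * ‖extrapolation x y θ (k + 1) - xs‖ ^ 2 ≤
      L / 2 * ‖x 0 - xs‖ ^ 2 := by
  induction k with
  | zero =>
    have := h.energy_step hL hconv hgrad hlip xs 0
    rw [h.θ_zero, h.extrapolation_zero] at this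
    rw [h.θ_zero]
    linarith
  | succ k ih =>
    have := h.energy_step hL hconv hgrad hlip xs (k + 1)
    rw [momentum_succ_sq_sub h.θ_succ k] at this
    linarith

theorem sub_le_div_sq (h : IsAcceleratedGradient L f' x y θ) (hL : 0 < L)
    (hconv : ConvexOn ℝ univ f) (hgrad : ∀ z, HasGradientAt f (f' z) z)
    (hlip : ∀ z w, ‖f' z - f' w‖ ≤ L * ‖z - w‖) {xs : E} (hmin : ∀ z, f xs ≤ f z) (k : ℕ) :
    f (x k) - f xs ≤ 2 * L * ‖x 0 - xs‖ ^ 2 / ((k : ℝ) + 1) ^ 2 := by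
  cases k with
  | zero =>
    have := sub_le_half_mul_sq_of_isMin hgrad hlip hmin (x 0)
    have : 0 ≤ L * ‖x 0 - xs‖ ^ 2 := by positivity
    simp only [CharP.cast_eq_zero, zero_add, one_pow, div_one]
    linarith
  | succ k =>
    have hgap : 0 ≤ f (x (k + 1)) - f xs := sub_nonneg.2 (hmin _)
    have henergy : θ k ^ 2 * (f (x (k + 1)) - f xs) ≤ L / 2 * ‖x 0 - xs‖ ^ 2 :=
      le_of_add_le_of_nonneg_left (h.energy_le hL hconv hgrad hlip xs k) (by positivity)
    have hθsq : ((k : ℝ) + 2) ^ 2 / 4 ≤ θ k ^ 2 :=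
      calc ((k : ℝ) + 2) ^ 2 / 4 = (((k : ℝ) + 2) / 2) ^ 2 := by ring
        _ ≤ θ k ^ 2 := by gcongr; exact half_add_one_le_momentum h.θ_zero h.θ_succ k
    rw [le_div_iff₀ (by positivity)]
    push_cast
    linarith [mul_le_mul_of_nonneg_right hθsq hgap]

end IsAcceleratedGradient

end Accelerated

theorem exists_le_sqrt_div_of_le_div_sq {e : ℕ → ℝ} {C η : ℝ} (hη : 0 < η)
    (he : ∀ k, e k ≤ C / ((k : ℝ) + 1) ^ 2) :
    ∃ k : ℕ, (k : ℝ) ≤ √(C / η) ∧ e k ≤ η := by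
  refine ⟨⌊√(C / η)⌋₊, Nat.floor_le (Real.sqrt_nonneg _), (he _).trans ?_⟩
  have hk : √(C / η) ≤ (⌊√(C / η)⌋₊ : ℝ) + 1 := (Nat.lt_floor_add_one _).le
  rw [Real.sqrt_le_left (by positivity), div_le_iff₀ hη] at hk
  rw [div_le_iff₀ (by positivity)]
  linarith

theorem accel_decrement_general {d : ℕ} (f : EuclideanSpace ℝ (Fin d) → ℝ)
    (f' : EuclideanSpace ℝ (Fin d) → EuclideanSpace ℝ (Fin d))
    (L : ℝ) (hL : 0 < L)
    (hconv : ConvexOn ℝ Set.univ f)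
    (hgrad : ∀ z, HasGradientAt f (f' z) z)
    (hlip : ∀ z w, ‖f' z - f' w‖ ≤ L * ‖z - w‖)
    (fstar : ℝ) (Xstar : Set (EuclideanSpace ℝ (Fin d)))
    (hXstar : Xstar = {z | f z = fstar})
    (hlb : ∀ z, fstar ≤ f z)
    (hne : Xstar.Nonempty)
    (x y : ℕ → EuclideanSpace ℝ (Fin d)) (θ : ℕ → ℝ)
    (hθ0 : θ 0 = 1) (hy0 : y 0 = x 0)
    (hx : ∀ k, x (k + 1) = y k - (1 / L) • f' (y k))
    (hθ : ∀ k, θ (k + 1) = (1 + Real.sqrt (1 + 4 * (θ k) ^ 2)) / 2)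
    (hy : ∀ k, y (k + 1) = x (k + 1) + ((θ k - 1) / θ (k + 1)) • (x (k + 1) - x k))
    (ε δ D : ℝ) (hε : 0 < ε) (hδε : δ ≥ 2 * ε)
    (hgap : f (x 0) - fstar ≥ δ)
    (hdist : Metric.infDist (x 0) Xstar ≤ D) :
    ∃ k : ℕ, (k : ℝ) ≤ Real.sqrt (2 * L * D ^ 2 / (δ - ε)) ∧
      f (x k) ≤ f (x 0) - ε := by
  have hcont : Continuous f := continuous_iff_continuousAt.2 fun z =>
    (hgrad z).differentiableAt.continuousAt
  have hclosed : IsClosed Xstar := hXstar ▸ isClosed_eq hcont continuous_const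
  obtain ⟨xs, hxs, hdist_xs⟩ := hclosed.exists_infDist_eq_dist hne (x 0)
  have hfxs : f xs = fstar := by simpa [hXstar] using hxs
  have hmin : ∀ z, f xs ≤ f z := hfxs ▸ hlb
  have hxsD : ‖x 0 - xs‖ ≤ D := by rwa [← dist_eq_norm, ← hdist_xs]
  have hacc : IsAcceleratedGradient L f' x y θ := ⟨hθ0, hy0, hx, hθ, hy⟩
  have hrate : ∀ k : ℕ, f (x k) - fstar ≤ 2 * L * D ^ 2 / ((k : ℝ) + 1) ^ 2 := fun k =>
    hfxs ▸ (hacc.sub_le_div_sq hL hconv hgrad hlip hmin k).trans (by gcongr)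
  obtain ⟨k, hk, hgap_k⟩ := exists_le_sqrt_div_of_le_div_sq (η := δ - ε) (by linarith) hrate
  exact ⟨k, hk, by linarith⟩

/-- **Decrement guarantee for the accelerated method** (Proposition: accelerated method).
If `f : ℝ^d → ℝ` is convex and differentiable with `L`-Lipschitz gradient (`L > 0`),
has nonempty minimizer set `Xstar` with minimum value `fstar`, and `(x k)` are the
iterates of the accelerated method from `x 0`, then for any `δ ≥ 2ε > 0` and `D > 0`
with `f (x 0) - fstar ≥ δ` and `dist (x 0) Xstar ≤ D`, there is `k ≤ √(2LD²/(δ-ε))`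
with `f (x k) ≤ f (x 0) - ε`. -/
theorem accel_decrement {d : ℕ} (f : EuclideanSpace ℝ (Fin d) → ℝ)
    (f' : EuclideanSpace ℝ (Fin d) → EuclideanSpace ℝ (Fin d))
    (L : ℝ) (hL : 0 < L)
    (hconv : ConvexOn ℝ Set.univ f)
    (hgrad : ∀ z, HasGradientAt f (f' z) z)
    (hlip : ∀ z w, ‖f' z - f' w‖ ≤ L * ‖z - w‖)
    (fstar : ℝ) (Xstar : Set (EuclideanSpace ℝ (Fin d)))
    (hXstar : Xstar = {z | f z = fstar})
    (hlb : ∀ z, fstar ≤ f z)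
    (hne : Xstar.Nonempty)
    (x y : ℕ → EuclideanSpace ℝ (Fin d)) (θ : ℕ → ℝ)
    (hθ0 : θ 0 = 1) (hy0 : y 0 = x 0)
    (hx : ∀ k, x (k + 1) = y k - (1 / L) • f' (y k))
    (hθ : ∀ k, θ (k + 1) = (1 + Real.sqrt (1 + 4 * (θ k) ^ 2)) / 2)
    (hy : ∀ k, y (k + 1) = x (k + 1) + ((θ k - 1) / θ (k + 1)) • (x (k + 1) - x k))
    (ε δ D : ℝ) (hε : 0 < ε) (hδε : δ ≥ 2 * ε) (hD : 0 < D)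
    (hgap : f (x 0) - fstar ≥ δ)
    (hdist : Metric.infDist (x 0) Xstar ≤ D) :
    ∃ k : ℕ, (k : ℝ) ≤ Real.sqrt (2 * L * D ^ 2 / (δ - ε)) ∧
      f (x k) ≤ f (x 0) - ε :=
  accel_decrement_general f f' L hL hconv hgrad hlip fstar Xstar hXstar hlb hne x y θ hθ0 hy0 hx hθ
    hy ε δ D hε hδε hgap hdist
end

section
/- Let f : ℝ^d → ℝ be convex and M-Lipschitz (M > 0), with nonempty set of minimizers X⋆ and minimum value f⋆. Fix ε > 0 and let (x^(i)) and (g^(i)) be sequences in ℝ^d such that for every i, g^(i) is a subgradient of f at x^(i), and x^(i+1) = x^(i) − (ε/‖g^(i)‖₂²) g^(i) whenever g^(i) ≠ 0, while x^(i+1) = x^(i) whenever g^(i) = 0. Then for any reals δ, D with δ ≥ 2ε and D > 0, if f(x^(0)) − f⋆ ≥ δ and dist(x^(0), X⋆) ≤ D, there exists a natural number i with i ≤ M²D²/(2ε(δ − (3/2)ε)) such that f(x^(i)) ≤ f(x^(0)) − ε. -/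
/-!
Fix a minimizer `y` closest to `x 0`. Expanding the square, the step `x⁺ = x - (ε / ‖g‖²) g`
along a subgradient `g` at `x` satisfies
`‖g‖² (‖x - y‖² - ‖x⁺ - y‖²) = ε (2 ⟪g, x - y⟫ - ε) ≥ ε (2 (f x - f y) - ε)`,
and `‖g‖² ≤ M²` by Lipschitz continuity. While `f (x i) > f (x 0) - ε` the gap `f (x i) - f y`
exceeds `δ - ε`, so each step lowers `M² ‖x i - y‖²` by at least `2ε (δ - (3/2)ε)`. As
`M² ‖x 0 - y‖² ≤ M² D²`, this can happen at most `M² D² / (2ε (δ - (3/2)ε))` times in a row.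
-/

open scoped RealInnerProductSpace

lemma continuous_of_abs_sub_le_mul_norm {E : Type*} [SeminormedAddCommGroup E] {f : E → ℝ}
    {M : ℝ} (hlip : ∀ z w, |f z - f w| ≤ M * ‖z - w‖) :
    Continuous f :=
  (LipschitzWith.of_dist_le' (K := M) fun z w => by
    rw [Real.dist_eq, dist_eq_norm]; exact hlip z w).continuous

section SubgradientStep

variable {E : Type*} [NormedAddCommGroup E] [InnerProductSpace ℝ E] {f : E → ℝ} {M : ℝ}

lemma sq_norm_subgradient_le_sq {x g : E} (hsub : ∀ z, f z ≥ f x + ⟪g, z - x⟫)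
    (hlip : ∀ z w, |f z - f w| ≤ M * ‖z - w‖) : ‖g‖ ^ 2 ≤ M ^ 2 := by
  have hup : ‖g‖ ^ 2 ≤ f (x + g) - f x := by
    have := hsub (x + g)
    rw [add_sub_cancel_left, real_inner_self_eq_norm_sq] at this
    linarith
  have hlip' : f (x + g) - f x ≤ M * ‖g‖ := by
    simpa using (abs_le.1 (hlip (x + g) x)).2
  nlinarith [sq_nonneg (M - ‖g‖), norm_nonneg g]

lemma sq_norm_mul_sub_sq_norm_step (x g y : E) (ε : ℝ) (hg : g ≠ 0) :
    ‖g‖ ^ 2 * (‖x - y‖ ^ 2 - ‖x - (ε / ‖g‖ ^ 2) • g - y‖ ^ 2) = ε * (2 * ⟪g, x - y⟫ - ε) := by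
  have hg2 : ‖g‖ ^ 2 ≠ 0 := by positivity
  rw [show x - (ε / ‖g‖ ^ 2) • g - y = (x - y) - (ε / ‖g‖ ^ 2) • g by abel, norm_sub_sq_real (x - y),
    real_inner_smul_right, norm_smul, real_inner_comm, mul_pow, Real.norm_eq_abs, sq_abs]
  field_simp
  ring

lemma subgradient_step_descent {x g y : E} {ε : ℝ} (hε : 0 ≤ ε)
    (hsub : ∀ z, f z ≥ f x + ⟪g, z - x⟫) (hgM : ‖g‖ ^ 2 ≤ M ^ 2) (hg : g ≠ 0)
    (hgap : ε ≤ 2 * (f x - f y)) :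
    ε * (2 * (f x - f y) - ε) ≤ M ^ 2 * (‖x - y‖ ^ 2 - ‖x - (ε / ‖g‖ ^ 2) • g - y‖ ^ 2) := by
  have hinner : f x - f y ≤ ⟪g, x - y⟫ := by
    have := hsub y
    rw [← neg_sub, inner_neg_right] at this
    linarith
  have hlower : ε * (2 * (f x - f y) - ε) ≤
      ‖g‖ ^ 2 * (‖x - y‖ ^ 2 - ‖x - (ε / ‖g‖ ^ 2) • g - y‖ ^ 2) := by
    rw [sq_norm_mul_sub_sq_norm_step x g y ε hg]
    gcongr
  have hdecr : 0 ≤ ‖x - y‖ ^ 2 - ‖x - (ε / ‖g‖ ^ 2) • g - y‖ ^ 2 :=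
    nonneg_of_mul_nonneg_right ((mul_nonneg hε (by linarith)).trans hlower) (by positivity)
  exact hlower.trans (by gcongr)

lemma subgradient_steps_descent {ε a : ℝ} (hε : 0 < ε) (ha : ε ≤ 2 * a) {x g : ℕ → E}
    (hsub : ∀ i, ∀ z, f z ≥ f (x i) + ⟪g i, z - x i⟫)
    (hstep : ∀ i, g i ≠ 0 → x (i + 1) = x i - (ε / ‖g i‖ ^ 2) • g i)
    (hgM : ∀ i, ‖g i‖ ^ 2 ≤ M ^ 2) (y : E) (n : ℕ) (hgap : ∀ i < n, a ≤ f (x i) - f y) :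
    n * (ε * (2 * a - ε)) ≤ M ^ 2 * (‖x 0 - y‖ ^ 2 - ‖x n - y‖ ^ 2) := by
  induction n with
  | zero => simp
  | succ n ih =>
    have hgap_n := hgap n n.lt_succ_self
    have hg : g n ≠ 0 := by
      rintro hg0
      have := hsub n y
      rw [hg0, inner_zero_left] at this
      linarith
    have hdescent_n := subgradient_step_descent hε.le (hsub n) (hgM n) hg (by linarith)
    rw [← hstep n hg] at hdescent_n
    have hmono : ε * (2 * a - ε) ≤ ε * (2 * (f (x n) - f y) - ε) := by gcongr
    push_cast
    linarith [ih fun i hi => hgap i (hi.trans n.lt_succ_self)]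

end SubgradientStep

theorem subgradient_decrement_general {d : ℕ} (f : EuclideanSpace ℝ (Fin d) → ℝ)
    (M : ℝ)
    (hlip : ∀ z w, |f z - f w| ≤ M * ‖z - w‖)
    (fstar : ℝ) (Xstar : Set (EuclideanSpace ℝ (Fin d)))
    (hXstar : Xstar = {z | f z = fstar})
    (hne : Xstar.Nonempty)
    (ε : ℝ) (hε : 0 < ε)
    (x g : ℕ → EuclideanSpace ℝ (Fin d))
    (hsub : ∀ i, ∀ z, f z ≥ f (x i) + ⟪g i, z - x i⟫)
    (hstep : ∀ i, (g i ≠ 0 → x (i + 1) = x i - (ε / ‖g i‖ ^ 2) • g i) ∧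
      (g i = 0 → x (i + 1) = x i))
    (δ D : ℝ) (hδε : δ ≥ 2 * ε)
    (hgap : f (x 0) - fstar ≥ δ)
    (hdist : Metric.infDist (x 0) Xstar ≤ D) :
    ∃ i : ℕ, (i : ℝ) ≤ M ^ 2 * D ^ 2 / (2 * ε * (δ - (3 / 2) * ε)) ∧
      f (x i) ≤ f (x 0) - ε := by
  have hclosed : IsClosed Xstar :=
    hXstar ▸ isClosed_eq (continuous_of_abs_sub_le_mul_norm hlip) continuous_const
  obtain ⟨y, hyX, hy⟩ := hclosed.exists_infDist_eq_dist hne (x 0)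
  have hfy : f y = fstar := by rw [hXstar] at hyX; exact hyX
  have hyD : ‖x 0 - y‖ ≤ D := by rw [← dist_eq_norm, ← hy]; exact hdist
  by_contra! hcon
  set B := M ^ 2 * D ^ 2 / (2 * ε * (δ - (3 / 2) * ε))
  have hden : 0 < 2 * ε * (δ - (3 / 2) * ε) := by nlinarith
  have hB : 0 ≤ B := by positivity
  have hdescent := subgradient_steps_descent (a := δ - ε) hε (by linarith) hsub
    (fun i => (hstep i).1) (fun i => sq_norm_subgradient_le_sq (hsub i) hlip) y (⌊B⌋₊ + 1)
    fun i hi => by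
      have := hcon i ((Nat.cast_le.2 (Nat.lt_succ_iff.1 hi)).trans (Nat.floor_le hB))
      linarith
  have hbound : ((⌊B⌋₊ + 1 : ℕ) : ℝ) * (2 * ε * (δ - (3 / 2) * ε)) ≤ M ^ 2 * D ^ 2 := by
    have : M ^ 2 * ‖x 0 - y‖ ^ 2 ≤ M ^ 2 * D ^ 2 := by gcongr
    nlinarith [sq_nonneg ‖x (⌊B⌋₊ + 1) - y‖, sq_nonneg M]
  have := Nat.lt_floor_add_one B
  rw [← le_div_iff₀ hden] at hbound
  push_cast at hbound
  linarith

/-- **Decrement guarantee for the subgradient method** (Proposition: subgradient method).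
`f` is convex and `M`-Lipschitz with nonempty minimizer set `Xstar` and minimum value
`fstar`. The iterates satisfy `x (i+1) = x i - (ε/‖g i‖²) • g i` when `g i ≠ 0` and
`x (i+1) = x i` when `g i = 0`, where `g i` is a subgradient of `f` at `x i`.
If `f (x 0) - fstar ≥ δ ≥ 2ε` and `dist (x 0) Xstar ≤ D > 0`, there is
`i ≤ M²D²/(2ε(δ - (3/2)ε))` with `f (x i) ≤ f (x 0) - ε`. -/
theorem subgradient_decrement {d : ℕ} (f : EuclideanSpace ℝ (Fin d) → ℝ)
    (M : ℝ) (hM : 0 < M)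
    (hconv : ConvexOn ℝ Set.univ f)
    (hlip : ∀ z w, |f z - f w| ≤ M * ‖z - w‖)
    (fstar : ℝ) (Xstar : Set (EuclideanSpace ℝ (Fin d)))
    (hXstar : Xstar = {z | f z = fstar})
    (hlb : ∀ z, fstar ≤ f z)
    (hne : Xstar.Nonempty)
    (ε : ℝ) (hε : 0 < ε)
    (x g : ℕ → EuclideanSpace ℝ (Fin d))
    (hsub : ∀ i, ∀ z, f z ≥ f (x i) + ⟪g i, z - x i⟫)
    (hstep : ∀ i, (g i ≠ 0 → x (i + 1) = x i - (ε / ‖g i‖ ^ 2) • g i) ∧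
      (g i = 0 → x (i + 1) = x i))
    (δ D : ℝ) (hδε : δ ≥ 2 * ε) (hD : 0 < D)
    (hgap : f (x 0) - fstar ≥ δ)
    (hdist : Metric.infDist (x 0) Xstar ≤ D) :
    ∃ i : ℕ, (i : ℝ) ≤ M ^ 2 * D ^ 2 / (2 * ε * (δ - (3 / 2) * ε)) ∧
      f (x i) ≤ f (x 0) - ε :=
  subgradient_decrement_general f M hlip fstar Xstar hXstar hne ε hε x g hsub hstep δ D hδε hgap
    hdist
end

section
/- Let a > 0 and 0 < ε < Δ₀. Then for any integer m ≥ 1 and any positive reals ε₀, …, ε_m satisfying ε₀ ≤ ε/2 and ε_m ≥ Δ₀/2, one has ∑_{k=0}^{m−1} (ε_{k+1}/ε_k)^a ≥ e·a·log(Δ₀/ε). -/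
lemma exp_mul_le_exp (x : ℝ) : Real.exp 1 * x ≤ Real.exp x := by
  have h1 : x ≤ Real.exp (x - 1) := by
    have := Real.add_one_le_exp (x - 1); linarith
  have h2 : Real.exp x = Real.exp (x - 1) * Real.exp 1 := by
    rw [← Real.exp_add]; ring_nf
  nlinarith [Real.exp_pos 1, Real.exp_pos (x - 1)]

/-- **Lower bound for the linear-rate objective** (Proposition: lower bound, linear rate,
first part). For any `m ≥ 1` and positive `ε₀, …, ε_m` with `ε₀ ≤ ε/2` and
`ε_m ≥ Δ₀/2`, one has `∑_{k=0}^{m-1} (ε_{k+1}/ε_k)^a ≥ e·a·log(Δ₀/ε)`. -/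
theorem linear_rate_lower_bound (a ε Δ₀ : ℝ)
    (ha : 0 < a) (hε : 0 < ε) (hεΔ : ε < Δ₀)
    (m : ℕ) (hm : 1 ≤ m) (eps : ℕ → ℝ)
    (hpos : ∀ k ≤ m, 0 < eps k)
    (h0 : eps 0 ≤ ε / 2) (hM : eps m ≥ Δ₀ / 2) :
    ∑ k ∈ Finset.range m, (eps (k + 1) / eps k) ^ a ≥
      Real.exp 1 * a * Real.log (Δ₀ / ε) := by
  have key : ∀ k ∈ Finset.range m,
      Real.exp 1 * a * (Real.log (eps (k+1)) - Real.log (eps k)) ≤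
        (eps (k + 1) / eps k) ^ a := by
    intro k hk
    rw [Finset.mem_range] at hk
    have hk1 : 0 < eps (k+1) := hpos _ (by omega)
    have hk0 : 0 < eps k := hpos _ (by omega)
    have hr : 0 < eps (k+1) / eps k := div_pos hk1 hk0
    have : (eps (k + 1) / eps k) ^ a = Real.exp (a * Real.log (eps (k+1) / eps k)) := by
      rw [Real.rpow_def_of_pos hr]; ring_nf
    rw [this, Real.log_div hk1.ne' hk0.ne']
    calc Real.exp 1 * a * (Real.log (eps (k+1)) - Real.log (eps k))
        = Real.exp 1 * (a * (Real.log (eps (k+1)) - Real.log (eps k))) := by ring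
      _ ≤ Real.exp (a * (Real.log (eps (k+1)) - Real.log (eps k))) := exp_mul_le_exp _
  have hsum := Finset.sum_le_sum key
  have htel : ∑ k ∈ Finset.range m,
      Real.exp 1 * a * (Real.log (eps (k+1)) - Real.log (eps k))
      = Real.exp 1 * a * (Real.log (eps m) - Real.log (eps 0)) := by
    rw [← Finset.mul_sum, Finset.sum_range_sub (fun k => Real.log (eps k))]
  have h0' : 0 < eps 0 := hpos 0 (by omega)
  have hm' : 0 < eps m := hpos m le_rfl
  have hlog : Real.log (Δ₀ / ε) ≤ Real.log (eps m) - Real.log (eps 0) := by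
    rw [← Real.log_div hm'.ne' h0'.ne']
    apply Real.log_le_log (div_pos (hε.trans hεΔ) hε)
    rw [div_le_div_iff₀ hε h0']
    nlinarith
  have he : 0 < Real.exp 1 * a := by positivity
  calc Real.exp 1 * a * Real.log (Δ₀ / ε)
      ≤ Real.exp 1 * a * (Real.log (eps m) - Real.log (eps 0)) := by
        exact mul_le_mul_of_nonneg_left hlog he.le
    _ = _ := htel.symm
    _ ≤ _ := hsum
end

section
/- Let a > 0 and 0 < ε < Δ₀. Then for any integer m ≥ 1 and any positive reals ε₀, …, ε_m satisfying ε₀ ≤ ε/2 and ε_m ≥ Δ₀/2, one has m · ∑_{k=0}^{m−1} (ε_{k+1}/ε_k)^a ≥ (e²a²/4) · (log(Δ₀/ε))². -/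
lemma exp_ge_sq (t : ℝ) (ht : 0 ≤ t) :
    Real.exp 1 ^ 2 * t ^ 2 / 4 ≤ Real.exp t := by
  have h1 : Real.exp 1 * (t / 2) ≤ Real.exp (t / 2) := by
    have h := Real.add_one_le_exp (t / 2 - 1)
    calc Real.exp 1 * (t / 2) = Real.exp 1 * ((t / 2 - 1) + 1) := by ring_nf
      _ ≤ Real.exp 1 * Real.exp (t / 2 - 1) := by
          nlinarith [Real.exp_pos 1]
      _ = Real.exp (t / 2) := by rw [← Real.exp_add]; ring_nf
  have h0 : 0 ≤ Real.exp 1 * (t / 2) :=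
    mul_nonneg (Real.exp_pos 1).le (by linarith)
  have hsq : (Real.exp 1 * (t / 2)) ^ 2 ≤ Real.exp (t / 2) ^ 2 :=
    pow_le_pow_left₀ h0 h1 2
  calc Real.exp 1 ^ 2 * t ^ 2 / 4 = (Real.exp 1 * (t / 2)) ^ 2 := by ring
    _ ≤ Real.exp (t / 2) ^ 2 := hsq
    _ = Real.exp t := by
        rw [← Real.exp_nat_mul]; congr 1; push_cast; ring

lemma telescope_prod (f : ℕ → ℝ) (n : ℕ) (hf : ∀ k ≤ n, f k ≠ 0) :
    ∏ k ∈ Finset.range n, f (k + 1) / f k = f n / f 0 := by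
  induction n with
  | zero => simp [div_self (hf 0 le_rfl)]
  | succ n ih =>
    rw [Finset.prod_range_succ, ih (fun k hk => hf k (hk.trans (Nat.le_succ n)))]
    have h0 := hf 0 (Nat.zero_le _)
    have hn := hf n (Nat.le_succ n)
    field_simp

/-- **Lower bound for the linear-rate objective, squared form** (Proposition: lower
bound, linear rate, second part). For any `m ≥ 1` and positive `ε₀, …, ε_m` with
`ε₀ ≤ ε/2` and `ε_m ≥ Δ₀/2`, one has
`m · ∑_{k=0}^{m-1} (ε_{k+1}/ε_k)^a ≥ (e²a²/4)·(log(Δ₀/ε))²`. -/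
theorem linear_rate_lower_bound_sq (a ε Δ₀ : ℝ)
    (ha : 0 < a) (hε : 0 < ε) (hεΔ : ε < Δ₀)
    (m : ℕ) (hm : 1 ≤ m) (eps : ℕ → ℝ)
    (hpos : ∀ k ≤ m, 0 < eps k)
    (h0 : eps 0 ≤ ε / 2) (hM : eps m ≥ Δ₀ / 2) :
    (m : ℝ) * ∑ k ∈ Finset.range m, (eps (k + 1) / eps k) ^ a ≥
      (Real.exp 1) ^ 2 * a ^ 2 / 4 * (Real.log (Δ₀ / ε)) ^ 2 := by
  have hm0 : (0 : ℝ) < m := by exact_mod_cast hm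
  set L := Real.log (Δ₀ / ε) with hL
  have hLpos : 0 < L := Real.log_pos (by rw [lt_div_iff₀ hε]; linarith)
  have hr : ∀ k ∈ Finset.range m, 0 < eps (k + 1) / eps k := fun k hk => by
    have hk' := Finset.mem_range.mp hk
    exact div_pos (hpos _ hk') (hpos _ hk'.le)
  -- AM-GM
  have amgm := Real.geom_mean_le_arith_mean_weighted (Finset.range m)
    (fun _ => (m : ℝ)⁻¹) (fun k => (eps (k + 1) / eps k) ^ a)
    (fun i _ => by positivity)
    (by simp [Finset.sum_const, mul_inv_cancel₀ hm0.ne'])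
    (fun i hi => Real.rpow_nonneg (hr i hi).le a)
  -- rewrite the geometric mean
  have hprod : ∏ k ∈ Finset.range m, ((eps (k + 1) / eps k) ^ a) ^ (m : ℝ)⁻¹
      = (eps m / eps 0) ^ (a * (m : ℝ)⁻¹) := by
    rw [Real.finset_prod_rpow _ _ (fun i hi => Real.rpow_nonneg (hr i hi).le a),
        Real.finset_prod_rpow _ _ (fun i hi => (hr i hi).le),
        ← Real.rpow_mul (Finset.prod_nonneg (fun i hi => (hr i hi).le)),
        telescope_prod eps m (fun k hk => (hpos k hk).ne')]
  rw [hprod] at amgm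
  -- base comparison : Δ₀/ε ≤ eps m / eps 0
  have hbase : Δ₀ / ε ≤ eps m / eps 0 := by
    rw [div_le_div_iff₀ hε (hpos 0 (Nat.zero_le _))]
    nlinarith [hpos 0 (Nat.zero_le _), hpos m le_rfl]
  have hone : (1 : ℝ) ≤ Δ₀ / ε := by
    rw [le_div_iff₀ hε]; linarith
  have hexp : Real.exp (L * (a * (m : ℝ)⁻¹)) ≤ (eps m / eps 0) ^ (a * (m : ℝ)⁻¹) := by
    rw [← Real.rpow_def_of_pos (by linarith : (0:ℝ) < Δ₀ / ε)]
    exact Real.rpow_le_rpow (by linarith) hbase (by positivity)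
  -- put it together
  have hS : (m : ℝ) * Real.exp (L * (a * (m : ℝ)⁻¹))
      ≤ ∑ k ∈ Finset.range m, (eps (k + 1) / eps k) ^ a := by
    have h2 : ∑ k ∈ Finset.range m, (m : ℝ)⁻¹ * (eps (k + 1) / eps k) ^ a
        = (m : ℝ)⁻¹ * ∑ k ∈ Finset.range m, (eps (k + 1) / eps k) ^ a := by
      rw [Finset.mul_sum]
    rw [h2] at amgm
    have h3 := mul_le_mul_of_nonneg_left (hexp.trans amgm) hm0.le
    have h4 : (m : ℝ) * ((m : ℝ)⁻¹ * ∑ k ∈ Finset.range m, (eps (k + 1) / eps k) ^ a)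
        = ∑ k ∈ Finset.range m, (eps (k + 1) / eps k) ^ a := by
      field_simp
    rwa [h4] at h3
  set t : ℝ := L * (a * (m : ℝ)⁻¹) with htdef
  have ht0 : 0 ≤ t := by positivity
  have hkey := exp_ge_sq t ht0
  have : (m : ℝ) * ((m : ℝ) * Real.exp t)
      ≤ (m : ℝ) * ∑ k ∈ Finset.range m, (eps (k + 1) / eps k) ^ a :=
    mul_le_mul_of_nonneg_left hS hm0.le
  refine le_trans ?_ this
  have hmexp : (m:ℝ) * ((m:ℝ) * (Real.exp 1 ^ 2 * t ^ 2 / 4)) ≤ (m:ℝ) * ((m:ℝ) * Real.exp t) := by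
    have := mul_le_mul_of_nonneg_left hkey hm0.le
    exact mul_le_mul_of_nonneg_left this hm0.le
  refine le_trans (le_of_eq ?_) hmexp
  rw [htdef]
  field_simp
end

section
/- Let 0 < a < b, let 0 < ε < Δ₀, let c₀ be a real number with 1 < c₀ < b/a, and define ε_k = (ε/(2e))·exp(c₀^k) for k ∈ ℕ. Then the series ∑_{k=0}^{∞} exp(−(b − a·c₀)·c₀^k) converges to some S < ∞, and for every natural number m, ∑_{k=0}^{m−1} ε_{k+1}^a / ε_k^b ≤ (2e/ε)^{b−a} · S. -/
/-- **Doubly exponential target sequence gives a summable bound** (part of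
Proposition: attainable sublinear rate). With `ε_k = (ε/(2e))·exp(c₀^k)` for
`1 < c₀ < b/a`, the series `∑_k exp(-(b - a·c₀)·c₀^k)` converges to some `S`, and for
every `m`, `∑_{k=0}^{m-1} ε_{k+1}^a / ε_k^b ≤ (2e/ε)^{b-a} · S`. -/
theorem doubly_exponential_sum_bound (a b ε Δ₀ c₀ : ℝ)
    (ha : 0 < a) (hab : a < b) (hε : 0 < ε) (hεΔ : ε < Δ₀)
    (hc1 : 1 < c₀) (hc2 : c₀ < b / a)
    (eps : ℕ → ℝ)
    (heps : ∀ k, eps k = (ε / (2 * Real.exp 1)) * Real.exp (c₀ ^ k)) :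
    ∃ S : ℝ, HasSum (fun k : ℕ => Real.exp (-(b - a * c₀) * c₀ ^ k)) S ∧
      ∀ m : ℕ, ∑ k ∈ Finset.range m, (eps (k + 1)) ^ a / (eps k) ^ b ≤
        (2 * Real.exp 1 / ε) ^ (b - a) * S := by
  set C := ε / (2 * Real.exp 1) with hC
  have hCpos : 0 < C := div_pos hε (by positivity)
  have hd : 0 < b - a * c₀ := by
    have h := (lt_div_iff₀ ha).mp hc2
    nlinarith
  -- summability
  have hsum : Summable (fun k : ℕ => Real.exp (-(b - a * c₀) * c₀ ^ k)) := by
    have hr1 : Real.exp (-((b - a * c₀) * (c₀ - 1))) < 1 := by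
      rw [Real.exp_lt_one_iff]
      nlinarith
    have hr0 : 0 ≤ Real.exp (-((b - a * c₀) * (c₀ - 1))) := (Real.exp_pos _).le
    refine Summable.of_nonneg_of_le (fun k => (Real.exp_pos _).le) ?_
      ((summable_geometric_of_lt_one hr0 hr1).mul_left (Real.exp (-(b - a * c₀))))
    intro k
    rw [← Real.exp_nat_mul, ← Real.exp_add, Real.exp_le_exp]
    have hbern : 1 + (k : ℝ) * (c₀ - 1) ≤ c₀ ^ k := by
      have := one_add_mul_le_pow (a := c₀ - 1) (by linarith) k
      simpa using this
    nlinarith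
  refine ⟨_, hsum.hasSum, fun m => ?_⟩
  have hterm : ∀ k : ℕ, (eps (k + 1)) ^ a / (eps k) ^ b =
      (2 * Real.exp 1 / ε) ^ (b - a) * Real.exp (-(b - a * c₀) * c₀ ^ k) := by
    intro k
    rw [heps, heps]
    have h1 : (C * Real.exp (c₀ ^ (k + 1))) ^ a = C ^ a * Real.exp (a * c₀ ^ (k + 1)) := by
      rw [Real.mul_rpow hCpos.le (Real.exp_pos _).le,
        Real.rpow_def_of_pos (Real.exp_pos _), Real.log_exp]; ring
    have h2 : (C * Real.exp (c₀ ^ k)) ^ b = C ^ b * Real.exp (b * c₀ ^ k) := by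
      rw [Real.mul_rpow hCpos.le (Real.exp_pos _).le,
        Real.rpow_def_of_pos (Real.exp_pos _), Real.log_exp]; ring
    have h3 : (2 * Real.exp 1 / ε) ^ (b - a) = C ^ a / C ^ b := by
      have : (2 * Real.exp 1 / ε) = C⁻¹ := by rw [hC, inv_div]
      rw [this, Real.inv_rpow hCpos.le, ← Real.rpow_neg hCpos.le, neg_sub,
        Real.rpow_sub hCpos]
    rw [h1, h2, h3, mul_div_mul_comm, ← Real.exp_sub]
    congr 1
    have : c₀ ^ (k + 1) = c₀ ^ k * c₀ := pow_succ c₀ k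
    rw [this]; ring
  rw [Finset.sum_congr rfl (fun k _ => hterm k), ← Finset.mul_sum]
  apply mul_le_mul_of_nonneg_left _ (Real.rpow_nonneg (by positivity) _)
  exact Summable.sum_le_tsum _ (fun k _ => (Real.exp_pos _).le) hsum
end

section
/- Let 0 < a < b and 0 < ε < Δ₀, and suppose log(Δ₀/ε) > max{e²/(b − a)², 1/(b − a)}. Then for any integer m ≥ 1 and any positive reals ε₀, …, ε_m satisfying ε₀ ≤ ε/2 and ε_m ≥ Δ₀/2, one has m · ∑_{k=0}^{m−1} ε_{k+1}^a / ε_k^b ≥ (2^{b−a−1} / log(b/a)) · (1/ε^{b−a}) · log(log(Δ₀/ε)). -/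
/-!
Rescale by `ε / 2`, so that `u₀ ≤ 1` and `u_m ≥ Δ₀ / ε`. With `q = b / a`,
`t_k = u_{k+1}^a / u_k^b` and `S = ∑ t_k`, the numbers `y_k = a log u_k` solve the linear
recurrence `y_{k+1} = q y_k + log t_k`, so `a log u_m ≤ q^m ∑ q^{-(k+1)} log t_k`. Bounding
`log t_k` by `0` (if `S < 1`) or by `t_k / e` gives `S ≥ 1` and `e b L ≤ q^m S`, where
`L = log (Δ₀ / ε)`. Put `M = log L / (2 log q)`, so that `q^M = √L`. If `m ≥ M` then
`m S ≥ m ≥ M`. Otherwise `1 ≤ m < M`, and since `x ↦ x q^{-x}` is log-concave,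
`m S ≥ e b L · min (1 / q, M / √L)`; both terms of the minimum are at least `M / (e b L)`
because `(b - a) √L > e`, the first one with the help of Bernoulli's inequality
`1 + M (q - 1) ≤ q^M`.
-/

open Real Finset Set

lemma eq_pow_mul_add_sum_of_succ_eq {q : ℝ} (hq : q ≠ 0) {y s : ℕ → ℝ} {m : ℕ}
    (h : ∀ k < m, y (k + 1) = q * y k + s k) :
    y m = q ^ m * (y 0 + ∑ k ∈ range m, s k / q ^ (k + 1)) := by
  induction m with
  | zero => simp
  | succ n ih =>
    rw [h n n.lt_succ_self, ih fun k hk => h k (hk.trans n.lt_succ_self), sum_range_succ]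
    field_simp
    ring

lemma log_le_div_exp_one {x : ℝ} (hx : 0 < x) : log x ≤ x / exp 1 := by
  have := log_le_sub_one_of_pos (div_pos hx (exp_pos 1))
  rw [log_div hx.ne' (exp_pos 1).ne', log_exp] at this
  linarith

lemma min_div_rpow_le_div_rpow {q x y z : ℝ} (hq : 0 < q) (hx : 0 < x) (hz : z ∈ Icc x y) :
    min (x / q ^ x) (y / q ^ y) ≤ z / q ^ z := by
  have hexp : ∀ t, 0 < t → t / q ^ t = exp (log t + -log q * t) := fun t ht => by
    rw [exp_add, exp_log ht, rpow_def_of_pos hq, neg_mul, exp_neg, div_eq_mul_inv]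
  have hconc : ConcaveOn ℝ (Ioi 0) fun t => log t + -log q * t :=
    strictConcaveOn_log_Ioi.concaveOn.add
      ((LinearMap.mul ℝ ℝ (-log q)).concaveOn (convex_Ioi 0))
  have hy : 0 < y := hx.trans_le (hz.1.trans hz.2)
  rw [hexp x hx, hexp y hy, hexp z (hx.trans_le hz.1), ← exp_monotone.map_min]
  exact exp_le_exp.2 (hconc.min_le_of_mem_Icc hx hy hz)

lemma rpow_log_div_two_mul_log {q L : ℝ} (hq : 0 < q) (hq1 : q ≠ 1) (hL : 0 < L) :
    q ^ (log L / (2 * log q)) = √L := by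
  rw [rpow_def_of_pos hq, ← exp_log (sqrt_pos.2 hL), log_sqrt hL.le]
  field_simp [log_ne_zero_of_pos_of_ne_one hq hq1]

lemma rpow_div_rpow_eq_rpow_mul_div_div {x y δ : ℝ} (hx : 0 ≤ x) (hy : 0 ≤ y) (hδ : 0 < δ)
    (a b : ℝ) : x ^ a / y ^ b = δ ^ (a - b) * ((x / δ) ^ a / (y / δ) ^ b) := by
  rw [div_rpow hx hδ.le, div_rpow hy hδ.le, rpow_sub hδ]
  have := rpow_pos_of_pos hδ a
  have := rpow_pos_of_pos hδ b
  field_simp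

section LinearRecurrence

variable {a b : ℝ} {u : ℕ → ℝ} {m : ℕ}

lemma rpow_div_rpow_succ_pos (hu : ∀ k ≤ m, 0 < u k) {k : ℕ} (hk : k < m) :
    0 < u (k + 1) ^ a / u k ^ b :=
  div_pos (rpow_pos_of_pos (hu _ hk) a) (rpow_pos_of_pos (hu _ hk.le) b)

lemma mul_log_le_pow_mul_sum_log (ha : 0 < a) (hb : 0 < b) (hu : ∀ k ≤ m, 0 < u k)
    (h0 : u 0 ≤ 1) :
    a * log (u m) ≤
      (b / a) ^ m * ∑ k ∈ range m, log (u (k + 1) ^ a / u k ^ b) / (b / a) ^ (k + 1) := by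
  have hrec : ∀ k < m, a * log (u (k + 1)) =
      b / a * (a * log (u k)) + log (u (k + 1) ^ a / u k ^ b) := fun k hk => by
    rw [log_div (rpow_pos_of_pos (hu _ hk) a).ne' (rpow_pos_of_pos (hu _ hk.le) b).ne',
      log_rpow (hu _ hk), log_rpow (hu _ hk.le)]
    field_simp
    ring
  rw [eq_pow_mul_add_sum_of_succ_eq (div_pos hb ha).ne' (y := fun k => a * log (u k)) hrec]
  have : a * log (u 0) ≤ 0 :=
    mul_nonpos_of_nonneg_of_nonpos ha.le (log_nonpos (hu 0 m.zero_le).le h0)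
  gcongr
  linarith

lemma one_le_sum_rpow_div_rpow (ha : 0 < a) (hb : 0 < b) (hu : ∀ k ≤ m, 0 < u k)
    (h0 : u 0 ≤ 1) (hm : 1 < u m) : 1 ≤ ∑ k ∈ range m, u (k + 1) ^ a / u k ^ b := by
  by_contra! hS
  have hterm : ∀ k ∈ range m, log (u (k + 1) ^ a / u k ^ b) / (b / a) ^ (k + 1) ≤ 0 := by
    intro k hk
    have ht : u (k + 1) ^ a / u k ^ b < 1 :=
      (single_le_sum (fun j hj => (rpow_div_rpow_succ_pos hu (mem_range.1 hj)).le) hk).trans_lt hS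
    exact div_nonpos_of_nonpos_of_nonneg
      (log_nonpos (rpow_div_rpow_succ_pos hu (mem_range.1 hk)).le ht.le) (by positivity)
  have hlog := (mul_log_le_pow_mul_sum_log ha hb hu h0).trans
    (mul_nonpos_of_nonneg_of_nonpos (pow_nonneg (div_pos hb ha).le m) (sum_nonpos hterm))
  exact (mul_pos ha (log_pos hm)).not_ge hlog

lemma exp_one_mul_mul_log_le_pow_mul_sum (ha : 0 < a) (hab : a ≤ b) (hu : ∀ k ≤ m, 0 < u k)
    (h0 : u 0 ≤ 1) :
    exp 1 * b * log (u m) ≤ (b / a) ^ m * ∑ k ∈ range m, u (k + 1) ^ a / u k ^ b := by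
  set q := b / a
  have hq : 1 ≤ q := (one_le_div ha).2 hab
  have hsum : ∑ k ∈ range m, log (u (k + 1) ^ a / u k ^ b) / q ^ (k + 1) ≤
      ∑ k ∈ range m, u (k + 1) ^ a / u k ^ b / (exp 1 * q) := by
    refine sum_le_sum fun k hk => ?_
    calc log (u (k + 1) ^ a / u k ^ b) / q ^ (k + 1)
        ≤ u (k + 1) ^ a / u k ^ b / exp 1 / q ^ (k + 1) := by
          gcongr; exact log_le_div_exp_one (rpow_div_rpow_succ_pos hu (mem_range.1 hk))
      _ ≤ u (k + 1) ^ a / u k ^ b / exp 1 / q := by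
          have := (rpow_div_rpow_succ_pos (a := a) (b := b) hu (mem_range.1 hk)).le
          gcongr; exact le_self_pow₀ hq k.succ_ne_zero
      _ = _ := by rw [div_div]
  have key := (mul_log_le_pow_mul_sum_log ha (ha.trans_le hab) hu h0).trans
    (mul_le_mul_of_nonneg_left hsum (by positivity))
  rw [← sum_div, mul_div_assoc', le_div_iff₀ (by positivity)] at key
  have hqa : q * a = b := div_mul_cancel₀ b ha.ne'
  calc exp 1 * b * log (u m) = a * log (u m) * (exp 1 * q) := by rw [← hqa]; ring
    _ ≤ _ := key

end LinearRecurrence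

lemma log_div_two_mul_log_le_mul {a b L S : ℝ} (ha : 0 < a) (hab : a < b)
    (hL : exp 1 ^ 2 / (b - a) ^ 2 < L) {m : ℕ} (hm : 1 ≤ m) (hS : 1 ≤ S)
    (hkey : exp 1 * b * L ≤ (b / a) ^ m * S) :
    log L / (2 * log (b / a)) ≤ m * S := by
  set q := b / a
  set σ := √L
  set M := log L / (2 * log q)
  have hq : 1 < q := (one_lt_div ha).2 hab
  have hqa : q * a = b := div_mul_cancel₀ b ha.ne'
  have hb : 0 < b := ha.trans hab
  have hba : 0 < b - a := sub_pos.2 hab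
  have he : 1 ≤ exp 1 := one_le_exp zero_le_one
  have hσ : exp 1 < (b - a) * σ := by
    rw [← div_lt_iff₀' hba]
    exact lt_sqrt_of_sq_lt (by rwa [div_pow])
  have hσ0 : 0 < σ := pos_of_mul_pos_right ((exp_pos 1).trans hσ) hba.le
  have hL0 : 0 < L := sqrt_pos.1 hσ0
  have hσL : σ * σ = L := mul_self_sqrt hL0.le
  have hqM : q ^ M = σ := rpow_log_div_two_mul_log (by linarith) hq.ne' hL0
  rcases le_or_gt M m with hMm | hmM
  · exact hMm.trans (le_mul_of_one_le_right (by positivity) hS)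
  have hm1 : (1 : ℝ) ≤ m := by exact_mod_cast hm
  have hM0 : 0 < M := by linarith
  have hleft : M ≤ exp 1 * b * L * (1 / q ^ (1 : ℝ)) := by
    have hB := one_add_mul_self_le_rpow_one_add (s := q - 1) (by linarith) (hm1.trans hmM.le)
    rw [add_sub_cancel, hqM] at hB
    have hMa : M * (b - a) ≤ a * σ := by
      rw [← hqa, ← sub_one_mul, ← mul_assoc, mul_comm a σ]
      exact mul_le_mul_of_nonneg_right (by linarith) ha.le
    calc M ≤ M * (exp 1 * ((b - a) * σ)) := le_mul_of_one_le_right hM0.le (by nlinarith)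
      _ = exp 1 * σ * (M * (b - a)) := by ring
      _ ≤ exp 1 * σ * (a * σ) := by gcongr
      _ = _ := by rw [rpow_one, ← hσL, ← hqa]; field_simp
  have hright : M ≤ exp 1 * b * L * (M / q ^ M) := by
    have hbσ : (b - a) * σ ≤ b * σ := by nlinarith
    calc M ≤ exp 1 * b * σ * M := le_mul_of_one_le_left hM0.le (by nlinarith)
      _ = _ := by rw [hqM, ← hσL]; field_simp
  calc M ≤ exp 1 * b * L * min (1 / q ^ (1 : ℝ)) (M / q ^ M) := by
        rw [mul_min_of_nonneg _ _ (by positivity)]; exact le_min hleft hright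
    _ ≤ exp 1 * b * L * (m / q ^ (m : ℝ)) := by
        gcongr
        exact min_div_rpow_le_div_rpow (by linarith) one_pos ⟨hm1, hmM.le⟩
    _ ≤ m * S := by
        rw [rpow_natCast, mul_div_assoc', div_le_iff₀ (by positivity)]
        nlinarith

theorem log_log_le_mul_sum_rpow_div_rpow {a b D : ℝ} (ha : 0 < a) (hab : a < b) (hD : 0 < D)
    (hlogD : exp 1 ^ 2 / (b - a) ^ 2 < log D) {u : ℕ → ℝ} {m : ℕ}
    (hu : ∀ k ≤ m, 0 < u k) (h0 : u 0 ≤ 1) (hm : D ≤ u m) :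
    log (log D) / (2 * log (b / a)) ≤ m * ∑ k ∈ range m, u (k + 1) ^ a / u k ^ b := by
  have hD1 : 1 < D := (log_pos_iff hD.le).1 (lt_of_le_of_lt (by positivity) hlogD)
  have hum : 1 < u m := hD1.trans_le hm
  have hm1 : 1 ≤ m := Nat.one_le_iff_ne_zero.2 fun h => by subst h; linarith
  refine log_div_two_mul_log_le_mul ha hab hlogD hm1
    (one_le_sum_rpow_div_rpow ha (ha.trans hab) hu h0 hum) ?_
  calc exp 1 * b * log D ≤ exp 1 * b * log (u m) :=
        mul_le_mul_of_nonneg_left (log_le_log hD hm) (by positivity [ha.trans hab])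
    _ ≤ _ := exp_one_mul_mul_log_le_pow_mul_sum ha hab.le hu h0

theorem sublinear_rate_lower_bound_general (a b ε Δ₀ : ℝ)
    (ha : 0 < a) (hab : a < b) (hε : 0 < ε) (hεΔ : ε < Δ₀)
    (hbig : Real.log (Δ₀ / ε) >
      max ((Real.exp 1) ^ 2 / (b - a) ^ 2) (1 / (b - a)))
    (m : ℕ) (eps : ℕ → ℝ)
    (hpos : ∀ k ≤ m, 0 < eps k)
    (h0 : eps 0 ≤ ε / 2) (hM : eps m ≥ Δ₀ / 2) :
    (m : ℝ) * ∑ k ∈ Finset.range m, (eps (k + 1)) ^ a / (eps k) ^ b ≥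
      (2 : ℝ) ^ (b - a - 1) / Real.log (b / a) * (1 / ε ^ (b - a)) *
        Real.log (Real.log (Δ₀ / ε)) := by
  set δ := ε / 2
  have hδ : 0 < δ := by positivity
  have hnorm := log_log_le_mul_sum_rpow_div_rpow ha hab (div_pos (hε.trans hεΔ) hε)
    (lt_of_le_of_lt (le_max_left _ _) hbig) (u := fun k => eps k / δ)
    (fun k hk => div_pos (hpos k hk) hδ) ((div_le_one hδ).2 h0)
    (calc Δ₀ / ε = Δ₀ / 2 / δ := by simp only [δ]; field_simp
      _ ≤ eps m / δ := by gcongr)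
  have hscale : (2 : ℝ) ^ (b - a - 1) * (1 / ε ^ (b - a)) = δ ^ (a - b) / 2 := by
    rw [div_rpow hε.le two_pos.le, rpow_sub_one two_ne_zero, ← neg_sub b a, rpow_neg hε.le,
      rpow_neg two_pos.le]
    have := rpow_pos_of_pos hε (b - a)
    have := rpow_pos_of_pos two_pos (b - a)
    field_simp
  rw [sum_congr rfl fun k hk => rpow_div_rpow_eq_rpow_mul_div_div
    (hpos _ (mem_range.1 hk)).le (hpos _ (mem_range.1 hk).le).le hδ a b, ← mul_sum]
  calc (2 : ℝ) ^ (b - a - 1) / log (b / a) * (1 / ε ^ (b - a)) * log (log (Δ₀ / ε))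
      = δ ^ (a - b) * (log (log (Δ₀ / ε)) / (2 * log (b / a))) := by
        rw [div_mul_eq_mul_div, hscale]; ring
    _ ≤ δ ^ (a - b) * (m * ∑ k ∈ range m, (eps (k + 1) / δ) ^ a / (eps k / δ) ^ b) := by
        gcongr
    _ = _ := by ring

/-- **Doubly logarithmic lower bound** (Proposition: lower bound, sublinear rate).
If `log(Δ₀/ε) > max{e²/(b-a)², 1/(b-a)}`, then for any `m ≥ 1` and positive
`ε₀, …, ε_m` with `ε₀ ≤ ε/2` and `ε_m ≥ Δ₀/2`,
`m · ∑_{k=0}^{m-1} ε_{k+1}^a/ε_k^b ≥ (2^{b-a-1}/log(b/a)) · (1/ε^{b-a}) · log(log(Δ₀/ε))`. -/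
theorem sublinear_rate_lower_bound (a b ε Δ₀ : ℝ)
    (ha : 0 < a) (hab : a < b) (hε : 0 < ε) (hεΔ : ε < Δ₀)
    (hbig : Real.log (Δ₀ / ε) >
      max ((Real.exp 1) ^ 2 / (b - a) ^ 2) (1 / (b - a)))
    (m : ℕ) (hm : 1 ≤ m) (eps : ℕ → ℝ)
    (hpos : ∀ k ≤ m, 0 < eps k)
    (h0 : eps 0 ≤ ε / 2) (hM : eps m ≥ Δ₀ / 2) :
    (m : ℝ) * ∑ k ∈ Finset.range m, (eps (k + 1)) ^ a / (eps k) ^ b ≥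
      (2 : ℝ) ^ (b - a - 1) / Real.log (b / a) * (1 / ε ^ (b - a)) *
        Real.log (Real.log (Δ₀ / ε)) :=
  sublinear_rate_lower_bound_general a b ε Δ₀ ha hab hε hεΔ hbig m eps hpos h0 hM
end

section
/- Let 0 < a < b, let 0 < ε < Δ₀, let m ≥ 1 be an integer, and set c = b/a. Then for any positive reals ε₀, …, ε_m satisfying ε₀ ≤ ε/2 and ε_m ≥ Δ₀/2, one has ∑_{k=0}^{m−1} ε_{k+1}^a / ε_k^b ≥ c^{1/(c−1) − m/(c^m−1)} · (2/ε)^{b−a} · (Δ₀/ε)^{(b−a)/(c^m−1)}. -/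
/-!
Weighted AM–GM, in logarithmic form (Jensen for `log`), with the geometric weights
`w k = c⁻¹ ^ k / S`, `S = ∑_{j<m} c⁻¹ ^ j`. Because `a * w k = b * w (k + 1)`, the terms
`w k * (a * log ε_{k+1} - b * log ε_k)` telescope to `b * w m * log ε_m - b * w 0 * log ε_0`,
which the boundary conditions bound from below. The entropy term
`-∑ w k * log (w k) = log S + (∑ k * w k) * log c` is at least `(1/(c-1) - m/(c^m-1)) * log c`,
since `S ≥ 1` and the mean index `∑ k * w k` equals `1/(c-1) - m/(c^m-1)`.
-/

open Finset Real

theorem one_sub_mul_sum_range_nat_mul_pow {R : Type*} [CommRing R] (r : R) (m : ℕ) :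
    (1 - r) * ∑ k ∈ range m, (k : R) * r ^ k = r * ∑ k ∈ range m, r ^ k - m * r ^ m := by
  induction m with
  | zero => simp
  | succ m ih =>
    rw [sum_range_succ, sum_range_succ, mul_add, ih]
    push_cast
    ring

theorem sum_mul_log_div_le_log_sum {ι : Type*} (s : Finset ι) (w t : ι → ℝ)
    (hw : ∀ i ∈ s, 0 < w i) (hw1 : ∑ i ∈ s, w i = 1) (ht : ∀ i ∈ s, 0 < t i) :
    ∑ i ∈ s, w i * log (t i / w i) ≤ log (∑ i ∈ s, t i) := by
  have jensen := strictConcaveOn_log_Ioi.concaveOn.le_map_sum (fun i hi => (hw i hi).le) hw1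
    (p := fun i => t i / w i) (fun i hi => div_pos (ht i hi) (hw i hi))
  have hcancel : ∑ i ∈ s, w i • (t i / w i) = ∑ i ∈ s, t i :=
    sum_congr rfl fun i hi => mul_div_cancel₀ _ (hw i hi).ne'
  simp only [smul_eq_mul] at jensen hcancel
  rwa [hcancel] at jensen

theorem sum_range_mul_sub_mul_of_mul_eq {R : Type*} [CommRing R] (a b : R) (w f : ℕ → R)
    (hw : ∀ k, a * w k = b * w (k + 1)) (m : ℕ) :
    ∑ k ∈ range m, w k * (a * f (k + 1) - b * f k) = b * (w m * f m - w 0 * f 0) := by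
  rw [← sum_range_sub (fun k => w k * f k), mul_sum]
  refine sum_congr rfl fun k _ => ?_
  linear_combination f (k + 1) * hw k

noncomputable def geomWeight (r : ℝ) (m k : ℕ) : ℝ := r ^ k / ∑ j ∈ range m, r ^ j

section geomWeight

variable {r : ℝ} {m : ℕ}

theorem geomWeight_pos (hr : 0 < r) (hm : m ≠ 0) (k : ℕ) : 0 < geomWeight r m k :=
  div_pos (pow_pos hr k) (geom_sum_pos hr.le hm)

theorem sum_geomWeight (hr : 0 ≤ r) (hm : m ≠ 0) : ∑ k ∈ range m, geomWeight r m k = 1 := by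
  simp only [geomWeight]
  rw [← sum_div, div_self (geom_sum_pos hr hm).ne']

theorem geomWeight_succ (r : ℝ) (m k : ℕ) :
    geomWeight r m (k + 1) = r * geomWeight r m k := by
  simp only [geomWeight, pow_succ]
  ring

theorem log_geomWeight (hr : 0 < r) (hm : m ≠ 0) (k : ℕ) :
    log (geomWeight r m k) = k * log r - log (∑ j ∈ range m, r ^ j) := by
  rw [geomWeight, log_div (pow_pos hr k).ne' (geom_sum_pos hr.le hm).ne', log_pow]

theorem geomWeight_eq (hr : r ≠ 1) (k : ℕ) :
    geomWeight r m k = r ^ k * (1 - r) / (1 - r ^ m) := by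
  rw [geomWeight, ← mul_neg_geom_sum, mul_comm (1 - r),
    mul_div_mul_right _ _ (sub_ne_zero.mpr hr.symm)]

theorem sum_nat_mul_geomWeight (hr₀ : 0 ≤ r) (hr : r ≠ 1) (hm : m ≠ 0) :
    ∑ k ∈ range m, k * geomWeight r m k = r / (1 - r) - m * r ^ m / (1 - r ^ m) := by
  have hS := geom_sum_pos hr₀ hm
  have h1r : 1 - r ≠ 0 := sub_ne_zero.mpr hr.symm
  have h1rm : 1 - r ^ m ≠ 0 := by
    rw [← mul_neg_geom_sum]; exact mul_ne_zero h1r hS.ne'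
  have key := one_sub_mul_sum_range_nat_mul_pow r m
  have geom := mul_neg_geom_sum r m
  simp only [geomWeight, ← mul_div_assoc, ← sum_div]
  field_simp
  linear_combination (1 - r ^ m) * key + m * r ^ m * geom

end geomWeight

section chain

variable (a : ℝ) {c : ℝ} {m : ℕ} (x : ℕ → ℝ)

theorem rpow_div_rpow_pos (hx : ∀ k ≤ m, 0 < x k) (b : ℝ) {k : ℕ} (hk : k ∈ range m) :
    0 < x (k + 1) ^ a / x k ^ b := by
  have := hx (k + 1) (mem_range.mp hk)
  have := hx k (mem_range.mp hk).le
  positivity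

theorem sum_geomWeight_mul_log_le_log_sum (hc : 0 < c) (hm : m ≠ 0) (hx : ∀ k ≤ m, 0 < x k) :
    a * c * (geomWeight c⁻¹ m m * log (x m) - geomWeight c⁻¹ m 0 * log (x 0))
        + log (∑ j ∈ range m, c⁻¹ ^ j)
        + (∑ k ∈ range m, k * geomWeight c⁻¹ m k) * log c
      ≤ log (∑ k ∈ range m, x (k + 1) ^ a / x k ^ (a * c)) := by
  set w := geomWeight c⁻¹ m
  have hr : 0 < c⁻¹ := inv_pos.mpr hc
  have hw : ∀ k, a * w k = a * c * w (k + 1) := fun k => by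
    simp only [w, geomWeight_succ]
    field_simp
  have hlog : ∀ k ∈ range m, w k * log (x (k + 1) ^ a / x k ^ (a * c) / w k) =
      w k * (a * log (x (k + 1)) - a * c * log (x k))
        + (w k * log (∑ j ∈ range m, c⁻¹ ^ j) + k * w k * log c) := by
    intro k hk
    have hx₁ := hx (k + 1) (mem_range.mp hk)
    have hx₀ := hx k (mem_range.mp hk).le
    rw [log_div (rpow_div_rpow_pos a x hx _ hk).ne' (geomWeight_pos hr hm k).ne',
      log_div (by positivity) (by positivity), log_rpow hx₁, log_rpow hx₀, log_geomWeight hr hm,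
      log_inv]
    ring
  calc _ = ∑ k ∈ range m, w k * log (x (k + 1) ^ a / x k ^ (a * c) / w k) := by
        rw [sum_congr rfl hlog, sum_add_distrib, sum_add_distrib, ← sum_mul, ← sum_mul,
          sum_geomWeight hr.le hm, sum_range_mul_sub_mul_of_mul_eq _ _ w (fun k => log (x k)) hw]
        ring
    _ ≤ _ := sum_mul_log_div_le_log_sum _ _ _ (fun k _ => geomWeight_pos hr hm k)
        (sum_geomWeight hr.le hm) fun k hk => rpow_div_rpow_pos a x hx _ hk

theorem log_sum_rpow_div_rpow_mul_ge (hc : 1 < c) (hm : m ≠ 0) (hx : ∀ k ≤ m, 0 < x k) :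
    (1 / (c - 1) - m / (c ^ m - 1)) * log c
        + a * (c - 1) / (c ^ m - 1) * (log (x m) - log (x 0)) - a * (c - 1) * log (x 0)
      ≤ log (∑ k ∈ range m, x (k + 1) ^ a / x k ^ (a * c)) := by
  have hc₀ : 0 < c := one_pos.trans hc
  have hr : c⁻¹ ≠ 1 := inv_ne_one.mpr hc.ne'
  have hcm : c ^ m - 1 ≠ 0 := (sub_pos.mpr (one_lt_pow₀ hc hm)).ne'
  have hE : ∑ k ∈ range m, k * geomWeight c⁻¹ m k = 1 / (c - 1) - m / (c ^ m - 1) := by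
    rw [sum_nat_mul_geomWeight (inv_nonneg.mpr hc₀.le) hr hm, inv_pow]
    field_simp
  have hS : 0 ≤ log (∑ j ∈ range m, c⁻¹ ^ j) := log_nonneg <| by
    simpa using single_le_sum (f := fun j => c⁻¹ ^ j) (fun j _ => by positivity)
      (mem_range.mpr (Nat.pos_of_ne_zero hm))
  have hendpoints : a * c * (geomWeight c⁻¹ m m * log (x m) - geomWeight c⁻¹ m 0 * log (x 0)) =
      a * (c - 1) / (c ^ m - 1) * (log (x m) - log (x 0)) - a * (c - 1) * log (x 0) := by
    rw [geomWeight_eq hr, geomWeight_eq hr, pow_zero, inv_pow]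
    field_simp
    ring
  have key := sum_geomWeight_mul_log_le_log_sum a x hc₀ hm hx
  rw [hE, hendpoints] at key
  linarith

end chain

/-- **Lower bound for the fixed-`m` constrained problem** (Lemma: fixed m).
For `c = b/a`, any positive `ε₀, …, ε_m` with `ε₀ ≤ ε/2` and `ε_m ≥ Δ₀/2` satisfy
`∑_{k=0}^{m-1} ε_{k+1}^a/ε_k^b ≥ c^{1/(c-1) - m/(c^m-1)} · (2/ε)^{b-a} · (Δ₀/ε)^{(b-a)/(c^m-1)}`. -/
theorem fixed_m_lower_bound (a b ε Δ₀ : ℝ)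
    (ha : 0 < a) (hab : a < b) (hε : 0 < ε) (hεΔ : ε < Δ₀)
    (m : ℕ) (hm : 1 ≤ m) (c : ℝ) (hc : c = b / a)
    (eps : ℕ → ℝ)
    (hpos : ∀ k ≤ m, 0 < eps k)
    (h0 : eps 0 ≤ ε / 2) (hM : eps m ≥ Δ₀ / 2) :
    ∑ k ∈ Finset.range m, (eps (k + 1)) ^ a / (eps k) ^ b ≥
      c ^ (1 / (c - 1) - (m : ℝ) / (c ^ m - 1)) * (2 / ε) ^ (b - a) *
        (Δ₀ / ε) ^ ((b - a) / (c ^ m - 1)) := by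
  have hm₀ : m ≠ 0 := by omega
  have hc₁ : 1 < c := hc ▸ (one_lt_div ha).mpr hab
  have hb : b = a * c := by rw [hc]; field_simp
  have hΔ : 0 < Δ₀ := hε.trans hεΔ
  have hγ : 0 ≤ a * (c - 1) / (c ^ m - 1) :=
    div_nonneg (by nlinarith) (sub_pos.mpr (one_lt_pow₀ hc₁ hm₀)).le
  have hspread := mul_le_mul_of_nonneg_left (sub_le_sub (log_le_log (by linarith) hM)
    (log_le_log (hpos 0 m.zero_le) h0)) hγ
  have hstart := mul_le_mul_of_nonneg_left (log_le_log (hpos 0 m.zero_le) h0)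
    (by nlinarith : 0 ≤ a * (c - 1))
  have key := log_sum_rpow_div_rpow_mul_ge a eps hc₁ hm₀ hpos
  rw [← hb] at key
  have hsum : 0 < ∑ k ∈ range m, eps (k + 1) ^ a / eps k ^ b :=
    sum_pos (fun k hk => rpow_div_rpow_pos a eps hpos b hk) (nonempty_range_iff.mpr hm₀)
  have hba : b - a = a * (c - 1) := by rw [hb]; ring
  rw [ge_iff_le, ← log_le_log_iff (by positivity) hsum, log_mul (by positivity) (by positivity),
    log_mul (by positivity) (by positivity), log_rpow (by positivity), log_rpow (by positivity),
    log_rpow (by positivity), hba]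
  rw [log_div hΔ.ne' two_ne_zero, log_div hε.ne' two_ne_zero] at hspread
  rw [log_div hε.ne' two_ne_zero] at hstart
  rw [log_div two_ne_zero hε.ne', log_div hΔ.ne' hε.ne']
  linarith
end

section
/- Let 0 < a < b, let 0 < ε < Δ₀, let m ≥ 1 be an integer, and set c = b/a. Define ε̄_k = (ε/2) · (Δ₀/ε)^{(c^k − 1)/(c^m − 1)} · c^{k/(a(c−1)) − m(c^k − 1)/(a(c−1)(c^m − 1))} for 0 ≤ k ≤ m. Then ε̄₀ = ε/2, ε̄_m = Δ₀/2, and for every choice of positive reals ε₀, …, ε_m with ε₀ ≤ ε/2 and ε_m ≥ Δ₀/2 one has ∑_{k=0}^{m−1} ε_{k+1}^a / ε_k^b ≥ ∑_{k=0}^{m−1} ε̄_{k+1}^a / ε̄_k^b; moreover ∑_{k=0}^{m−1} ε̄_{k+1}^a / ε̄_k^b = (ε/2)^{a−b} · (Δ₀/ε)^{(b−a)/(c^m−1)} · c^{1/(c−1) − m/(c^m−1)} · ∑_{k=0}^{m−1} c^{−k}. -/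
theorem rpow_ratio_aux (P A C : ℝ) (hP : 0 < P) (hA : 0 < A) (hC : 0 < C)
    (a b u1 u0 v1 v0 : ℝ) :
    (P * A ^ u1 * C ^ v1) ^ a / (P * A ^ u0 * C ^ v0) ^ b
      = P ^ (a - b) * A ^ (u1 * a - u0 * b) * C ^ (v1 * a - v0 * b) := by
  rw [Real.mul_rpow (by positivity) (by positivity),
      Real.mul_rpow (by positivity) (by positivity),
      Real.mul_rpow (by positivity) (by positivity),
      Real.mul_rpow (by positivity) (by positivity),
      ← Real.rpow_mul hA.le, ← Real.rpow_mul hC.le,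
      ← Real.rpow_mul hA.le, ← Real.rpow_mul hC.le,
      Real.rpow_sub hP, Real.rpow_sub hA, Real.rpow_sub hC]
  field_simp

/-- **The optimal sequence for the fixed-`m` constrained problem** (Lemma: fixed m,
optimality part). For `c = b/a` and
`ε̄_k = (ε/2)·(Δ₀/ε)^{(c^k-1)/(c^m-1)}·c^{k/(a(c-1)) - m(c^k-1)/(a(c-1)(c^m-1))}`,
one has `ε̄₀ = ε/2`, `ε̄_m = Δ₀/2`, the sequence `ε̄` minimizes
`∑_{k=0}^{m-1} ε_{k+1}^a/ε_k^b` over all feasible sequences, and its objective value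
equals `(ε/2)^{a-b}·(Δ₀/ε)^{(b-a)/(c^m-1)}·c^{1/(c-1)-m/(c^m-1)}·∑_{k=0}^{m-1} c^{-k}`. -/
theorem fixed_m_optimal_sequence (a b ε Δ₀ : ℝ)
    (ha : 0 < a) (hab : a < b) (hε : 0 < ε) (hεΔ : ε < Δ₀)
    (m : ℕ) (hm : 1 ≤ m) (c : ℝ) (hc : c = b / a)
    (epsbar : ℕ → ℝ)
    (hepsbar : ∀ k ≤ m, epsbar k =
      (ε / 2) * (Δ₀ / ε) ^ ((c ^ k - 1) / (c ^ m - 1)) *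
        c ^ ((k : ℝ) / (a * (c - 1)) -
          (m : ℝ) * (c ^ k - 1) / (a * (c - 1) * (c ^ m - 1)))) :
    epsbar 0 = ε / 2 ∧ epsbar m = Δ₀ / 2 ∧
    (∀ eps : ℕ → ℝ, (∀ k ≤ m, 0 < eps k) → eps 0 ≤ ε / 2 → eps m ≥ Δ₀ / 2 →
      ∑ k ∈ Finset.range m, (eps (k + 1)) ^ a / (eps k) ^ b ≥
        ∑ k ∈ Finset.range m, (epsbar (k + 1)) ^ a / (epsbar k) ^ b) ∧
    ∑ k ∈ Finset.range m, (epsbar (k + 1)) ^ a / (epsbar k) ^ b =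
      (ε / 2) ^ (a - b) * (Δ₀ / ε) ^ ((b - a) / (c ^ m - 1)) *
        c ^ (1 / (c - 1) - (m : ℝ) / (c ^ m - 1)) *
        ∑ k ∈ Finset.range m, c ^ (-(k : ℝ)) := by
  have hb : 0 < b := ha.trans hab
  have hc1 : 1 < c := by rw [hc]; exact (one_lt_div ha).mpr hab
  have hcpos : 0 < c := lt_trans one_pos hc1
  have hcm1 : 0 < c ^ m - 1 := by
    have : 1 < c ^ m := one_lt_pow₀ hc1 (by omega)
    linarith
  have hc1' : c - 1 ≠ 0 := by linarith
  have hP : 0 < ε / 2 := by linarith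
  have hΔ : 0 < Δ₀ := lt_trans hε hεΔ
  have hA : 0 < Δ₀ / ε := div_pos hΔ hε
  have hba : b = a * c := by rw [hc]; field_simp
  -- epsbar 0 = ε/2
  have h0 : epsbar 0 = ε / 2 := by
    rw [hepsbar 0 (Nat.zero_le m)]
    norm_num
  -- epsbar m = Δ₀/2
  have hmval : epsbar m = Δ₀ / 2 := by
    rw [hepsbar m le_rfl, div_self hcm1.ne']
    have hv : (m : ℝ) / (a * (c - 1)) -
        (m : ℝ) * (c ^ m - 1) / (a * (c - 1) * (c ^ m - 1)) = 0 := by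
      field_simp
      ring
    rw [hv, Real.rpow_zero, Real.rpow_one, mul_one]
    field_simp
  -- positivity of epsbar
  have hbarpos : ∀ k ≤ m, 0 < epsbar k := by
    intro k hk
    rw [hepsbar k hk]
    positivity
  -- the constant K
  set K : ℝ := (ε / 2) ^ (a - b) * (Δ₀ / ε) ^ ((b - a) / (c ^ m - 1)) *
      c ^ (1 / (c - 1) - (m : ℝ) / (c ^ m - 1)) with hK
  have hKpos : 0 < K := by positivity
  -- each optimal term equals K * c^(-k)
  have hterm : ∀ k < m, epsbar (k + 1) ^ a / epsbar k ^ b = K * c ^ (-(k : ℝ)) := by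
    intro k hk
    rw [hepsbar (k + 1) (by omega), hepsbar k (le_of_lt hk),
        rpow_ratio_aux _ _ _ hP hA hcpos]
    have e1 : (c ^ (k + 1) - 1) / (c ^ m - 1) * a - (c ^ k - 1) / (c ^ m - 1) * b
        = (b - a) / (c ^ m - 1) := by
      rw [hba, pow_succ]
      field_simp
      ring
    have e2 : ((↑(k + 1) : ℝ) / (a * (c - 1)) -
          (m : ℝ) * (c ^ (k + 1) - 1) / (a * (c - 1) * (c ^ m - 1))) * a -
        ((k : ℝ) / (a * (c - 1)) -
          (m : ℝ) * (c ^ k - 1) / (a * (c - 1) * (c ^ m - 1))) * b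
        = (1 / (c - 1) - (m : ℝ) / (c ^ m - 1)) + (-(k : ℝ)) := by
      rw [hba, pow_succ]
      push_cast
      field_simp
      ring
    rw [e1, e2, Real.rpow_add hcpos]
    ring
  refine ⟨h0, hmval, ?_, ?_⟩
  · -- optimality
    intro eps hpos heps0 hepsm
    -- d k and g k
    set d : ℕ → ℝ := fun k => Real.log (eps k) - Real.log (epsbar k) with hd
    set g : ℕ → ℝ := fun k => a * K * c * (c ^ (-(k : ℝ)) * d k) with hg
    have step : ∀ k ∈ Finset.range m,
        epsbar (k + 1) ^ a / epsbar k ^ b + (g (k + 1) - g k) ≤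
          eps (k + 1) ^ a / eps k ^ b := by
      intro k hk
      rw [Finset.mem_range] at hk
      have he1 : 0 < eps (k + 1) := hpos (k + 1) (by omega)
      have he0 : 0 < eps k := hpos k (by omega)
      have hbe1 : 0 < epsbar (k + 1) := hbarpos (k + 1) (by omega)
      have hbe0 : 0 < epsbar k := hbarpos k (by omega)
      have hx : 0 < eps (k + 1) ^ a / eps k ^ b := by positivity
      have hxb : 0 < epsbar (k + 1) ^ a / epsbar k ^ b := by positivity
      -- tangent line inequality
      have hlog : Real.log ((eps (k + 1) ^ a / eps k ^ b) /
            (epsbar (k + 1) ^ a / epsbar k ^ b)) ≤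
          (eps (k + 1) ^ a / eps k ^ b) / (epsbar (k + 1) ^ a / epsbar k ^ b) - 1 :=
        Real.log_le_sub_one_of_pos (by positivity)
      rw [Real.log_div hx.ne' hxb.ne'] at hlog
      have hlog2 : (epsbar (k + 1) ^ a / epsbar k ^ b) *
            (Real.log (eps (k + 1) ^ a / eps k ^ b) -
              Real.log (epsbar (k + 1) ^ a / epsbar k ^ b)) ≤
          eps (k + 1) ^ a / eps k ^ b - epsbar (k + 1) ^ a / epsbar k ^ b := by
        have h2 := mul_le_mul_of_nonneg_left hlog hxb.le
        have h3 : (epsbar (k + 1) ^ a / epsbar k ^ b) *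
              ((eps (k + 1) ^ a / eps k ^ b) / (epsbar (k + 1) ^ a / epsbar k ^ b) - 1)
            = eps (k + 1) ^ a / eps k ^ b - epsbar (k + 1) ^ a / epsbar k ^ b := by
          rw [mul_sub, mul_one, mul_div_cancel₀ _ hxb.ne']
        linarith
      -- identify the log difference
      have hlogx : Real.log (eps (k + 1) ^ a / eps k ^ b)
          = a * Real.log (eps (k + 1)) - b * Real.log (eps k) := by
        rw [Real.log_div (by positivity) (by positivity),
            Real.log_rpow he1, Real.log_rpow he0]
      have hlogxb : Real.log (epsbar (k + 1) ^ a / epsbar k ^ b)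
          = a * Real.log (epsbar (k + 1)) - b * Real.log (epsbar k) := by
        rw [Real.log_div (by positivity) (by positivity),
            Real.log_rpow hbe1, Real.log_rpow hbe0]
      have hdd : Real.log (eps (k + 1) ^ a / eps k ^ b) -
            Real.log (epsbar (k + 1) ^ a / epsbar k ^ b)
          = a * d (k + 1) - b * d k := by
        rw [hlogx, hlogxb]
        simp only [hd]
        ring
      have hgdiff : g (k + 1) - g k =
          (epsbar (k + 1) ^ a / epsbar k ^ b) * (a * d (k + 1) - b * d k) := by
        rw [hterm k hk]
        simp only [hg]
        push_cast
        rw [show (c:ℝ) ^ (-(k:ℝ)) = c * c ^ (-((k:ℝ) + 1)) by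
          rw [show -(k:ℝ) = 1 + -((k:ℝ) + 1) by ring, Real.rpow_add hcpos, Real.rpow_one]]
        rw [hba]
        ring
      rw [hgdiff, ← hdd]
      linarith
    have hsum := Finset.sum_le_sum step
    rw [Finset.sum_add_distrib, Finset.sum_range_sub g] at hsum
    have hdm : 0 ≤ d m := by
      simp only [hd, hmval]
      have h1 : Real.log (Δ₀ / 2) ≤ Real.log (eps m) :=
        Real.log_le_log (by linarith) hepsm
      linarith
    have hd0 : d 0 ≤ 0 := by
      simp only [hd, h0]
      have h1 : Real.log (eps 0) ≤ Real.log (ε / 2) :=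
        Real.log_le_log (hpos 0 (Nat.zero_le m)) heps0
      linarith
    have hgm : 0 ≤ g m := by
      simp only [hg]
      exact mul_nonneg (by positivity) (mul_nonneg (by positivity) hdm)
    have hg0 : g 0 ≤ 0 := by
      simp only [hg]
      exact mul_nonpos_of_nonneg_of_nonpos (by positivity)
        (mul_nonpos_of_nonneg_of_nonpos (by positivity) hd0)
    linarith
  · -- value of the optimal objective
    rw [Finset.mul_sum]
    exact Finset.sum_congr rfl fun k hk => hterm k (Finset.mem_range.mp hk)
end

section
/- For all real numbers y > 1 and t ≥ 1, one has (t·y − log y)/(y − 1) > (log t)/(log y). -/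
/-- **Positivity of the auxiliary function `h(y,t)`** (step in Lemma: loglog bound,
case iii). For all reals `y > 1` and `t ≥ 1`,
`(t·y - log y)/(y - 1) > (log t)/(log y)`. -/
theorem aux_h_pos (y t : ℝ) (hy : 1 < y) (ht : 1 ≤ t) :
    (t * y - Real.log y) / (y - 1) > Real.log t / Real.log y := by
  have hy0 : (0:ℝ) < y := by linarith
  have hL : 0 < Real.log y := Real.log_pos hy
  have hy1 : 0 < y - 1 := by linarith
  have h1 : Real.log y < y - 1 := by
    have := Real.log_lt_sub_one_of_pos hy0 (by linarith)
    linarith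
  have h2 : Real.log t ≤ t - 1 := by
    have := Real.log_le_sub_one_of_pos (show (0:ℝ) < t by linarith)
    linarith
  have h3 : y - 1 < y * Real.log y := by
    have hinv : Real.log (1/y) < 1/y - 1 :=
      Real.log_lt_sub_one_of_pos (by positivity) (by
        intro h; rw [div_eq_one_iff_eq (by linarith)] at h; linarith)
    rw [one_div, Real.log_inv] at hinv
    have : 1 - y⁻¹ < Real.log y := by linarith
    calc y - 1 = y * (1 - y⁻¹) := by field_simp
    _ < y * Real.log y := by exact mul_lt_mul_of_pos_left this hy0
  rw [gt_iff_lt, div_lt_div_iff₀ hL hy1]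
  nlinarith [mul_nonneg (sub_nonneg.2 ht) (le_of_lt (sub_pos.2 h3)),
    mul_pos hL (sub_pos.2 h1), mul_le_mul_of_nonneg_right h2 (le_of_lt hy1)]
end
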